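/- Define g(n) := (t₁(n)/t₂(n))^{2n−7} for real (or integer) n ≥ 4, where t₁(n) := (−(n−2)(2n−3) − √(3(n−2)(2n−3)))/(2(2n−1)(2n−3)) and t₂(n) := (−(n−2)(2n−3) + √(3(n−2)(2n−3)))/(2(2n−1)(2n−3)). Then g is strictly increasing for n ≥ 4 and g(n) → e^{2√6} as n → ∞. -/

import Mathlib

/-- The smaller root `t₁(n)` of the quadratic `4(2n−3)(2n−1)t² + 4(n−2)(2n−3)t + (n−2)(n−3)`. -/
noncomputable def t1 (n : ℕ) : ℝ :=
  (-(((n : ℝ) - 2) * (2 * (n : ℝ) - 3)) - Real.sqrt (3 * ((n : ℝ) - 2) * (2 * (n : ℝ) - 3))) /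
    (2 * (2 * (n : ℝ) - 1) * (2 * (n : ℝ) - 3))

/-- The larger root `t₂(n)` of the quadratic `4(2n−3)(2n−1)t² + 4(n−2)(2n−3)t + (n−2)(n−3)`. -/
noncomputable def t2 (n : ℕ) : ℝ :=
  (-(((n : ℝ) - 2) * (2 * (n : ℝ) - 3)) + Real.sqrt (3 * ((n : ℝ) - 2) * (2 * (n : ℝ) - 3))) /
    (2 * (2 * (n : ℝ) - 1) * (2 * (n : ℝ) - 3))

/-- The function `g(n) = (t₁(n)/t₂(n))^{2n−7}`. -/
noncomputable def g (n : ℕ) : ℝ := (t1 n / t2 n) ^ (2 * n - 7)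

/-!
With `A = (n - 2)(2n - 3)` and `u = √(3 / A)` the two roots are `-A (1 ± u) / (2(2n - 1)(2n - 3))`,
so `t₁/t₂ = (1 + u)/(1 - u)` and `log g(n) = (2n - 7)(log (1 + u) - log (1 - u))`. Extended to real
`y > 3`, this has positive derivative because `log (1 + u) - log (1 - u) ≥ 2u + 2u³/3`. For the limit,
`2u ≤ log (1 + u) - log (1 - u) ≤ 2u / (1 - u²)` while `u → 0` and `(2y - 7) u → √6`.
-/

open Real Filter Topology Set

lemma two_mul_add_le_log_sub_log {x : ℝ} (h0 : 0 ≤ x) (h1 : x < 1) :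
    2 * x + 2 * x ^ 3 / 3 ≤ log (1 + x) - log (1 - x) := by
  have hs := hasSum_log_sub_log_of_abs_lt_one (abs_lt.2 ⟨by linarith, h1⟩)
  have := sum_le_hasSum (Finset.range 2) (fun k _ => by positivity) hs
  norm_num [Finset.sum_range_succ] at this
  linarith

lemma log_sub_log_le {x : ℝ} (h0 : 0 ≤ x) (h1 : x < 1) :
    log (1 + x) - log (1 - x) ≤ 2 * x / (1 - x ^ 2) := by
  have hx2 : x ^ 2 < 1 := by nlinarith
  have hgeom := ((hasSum_geometric_of_lt_one (sq_nonneg x) hx2).mul_left (2 * x))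
  rw [← div_eq_mul_inv] at hgeom
  refine hasSum_le (fun k => ?_) (hasSum_log_sub_log_of_abs_lt_one (abs_lt.2 ⟨by linarith, h1⟩))
    hgeom
  have hk : 1 ≤ 2 * (k : ℝ) + 1 := by linarith [k.cast_nonneg (α := ℝ)]
  calc 2 * (1 / (2 * k + 1)) * x ^ (2 * k + 1) ≤ 2 * 1 * x ^ (2 * k + 1) := by
        gcongr; exact div_le_one_of_le₀ hk (by positivity)
    _ = 2 * x * (x ^ 2) ^ k := by ring

lemma hasDerivAt_log_one_add_sub_log_one_sub {x : ℝ} (h0 : -1 < x) (h1 : x < 1) :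
    HasDerivAt (fun x => log (1 + x) - log (1 - x)) (2 / (1 - x ^ 2)) x := by
  have hp : 1 + x ≠ 0 := by linarith
  have hm : 1 - x ≠ 0 := by linarith
  refine ((((hasDerivAt_id' x).const_add 1).log hp).sub
    (((hasDerivAt_id' x).const_sub 1).log hm)).congr_deriv ?_
  rw [show 1 - x ^ 2 = (1 + x) * (1 - x) by ring]
  field_simp
  ring

lemma tendsto_mul_log_sub_log {α : Type*} {l : Filter α} {a u : α → ℝ} {c : ℝ}
    (ha : ∀ᶠ y in l, 0 ≤ a y) (hu : ∀ᶠ y in l, 0 ≤ u y) (hu0 : Tendsto u l (𝓝 0))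
    (hau : Tendsto (fun y => a y * u y) l (𝓝 c)) :
    Tendsto (fun y => a y * (log (1 + u y) - log (1 - u y))) l (𝓝 (2 * c)) := by
  have hlow : Tendsto (fun y => 2 * (a y * u y)) l (𝓝 (2 * c)) := hau.const_mul 2
  have hupp : Tendsto (fun y => 2 * (a y * u y) / (1 - u y ^ 2)) l (𝓝 (2 * c)) := by
    have h := hlow.div ((hu0.pow 2).const_sub 1) (by norm_num : (1 : ℝ) - 0 ^ 2 ≠ 0)
    rwa [zero_pow two_ne_zero, sub_zero, div_one] at h
  have hlt : ∀ᶠ y in l, u y < 1 := hu0.eventually (gt_mem_nhds one_pos)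
  refine tendsto_of_tendsto_of_tendsto_of_le_of_le' hlow hupp ?_ ?_
  · filter_upwards [ha, hu, hlt] with y ha hu hlt
    have := two_mul_add_le_log_sub_log hu hlt
    nlinarith [pow_nonneg hu 3]
  · filter_upwards [ha, hu, hlt] with y ha hu hlt
    calc a y * (log (1 + u y) - log (1 - u y)) ≤ a y * (2 * u y / (1 - u y ^ 2)) :=
          mul_le_mul_of_nonneg_left (log_sub_log_le hu hlt) ha
      _ = _ := by ring

noncomputable def ratioParam (y : ℝ) : ℝ := √(3 / ((y - 2) * (2 * y - 3)))

noncomputable def logG (y : ℝ) : ℝ :=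
  (2 * y - 7) * (log (1 + ratioParam y) - log (1 - ratioParam y))

lemma ratioParam_sq {y : ℝ} (hy : 2 ≤ y) : ratioParam y ^ 2 = 3 / ((y - 2) * (2 * y - 3)) :=
  sq_sqrt (div_nonneg (by norm_num) (mul_nonneg (by linarith) (by linarith)))

lemma ratioParam_pos {y : ℝ} (hy : 2 < y) : 0 < ratioParam y :=
  sqrt_pos.2 (div_pos (by norm_num) (mul_pos (by linarith) (by linarith)))

lemma ratioParam_lt_one {y : ℝ} (hy : 3 < y) : ratioParam y < 1 := by
  rw [ratioParam, sqrt_lt' one_pos, one_pow, div_lt_one (by nlinarith)]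
  nlinarith

lemma t1_div_t2 {n : ℕ} (hn : 3 ≤ n) :
    t1 n / t2 n = (1 + ratioParam n) / (1 - ratioParam n) := by
  have hy : (3 : ℝ) ≤ n := by exact_mod_cast hn
  set A := ((n : ℝ) - 2) * (2 * n - 3) with hA
  have hApos : 0 < A := by rw [hA]; nlinarith
  have hsqrt : √(3 * ((n : ℝ) - 2) * (2 * n - 3)) = A * ratioParam n := by
    rw [ratioParam, ← hA, show 3 * ((n : ℝ) - 2) * (2 * n - 3) = A ^ 2 * (3 / A) by
      field_simp; ring, sqrt_mul (sq_nonneg _), sqrt_sq hApos.le]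
  rw [t1, t2, hsqrt, div_div_div_cancel_right₀
    (mul_pos (mul_pos two_pos (by linarith)) (by linarith)).ne', ← hA]
  rw [show -A - A * ratioParam n = -A * (1 + ratioParam n) by ring,
    show -A + A * ratioParam n = -A * (1 - ratioParam n) by ring,
    mul_div_mul_left _ _ (neg_ne_zero.2 hApos.ne')]

lemma g_eq_exp_logG {n : ℕ} (hn : 4 ≤ n) : g n = exp (logG n) := by
  have hy : (3 : ℝ) < n := by exact_mod_cast hn
  have hpos : 0 < 1 + ratioParam n := by linarith [ratioParam_pos (y := n) (by linarith)]
  have hpos' : 0 < 1 - ratioParam n := by linarith [ratioParam_lt_one hy]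
  rw [g, t1_div_t2 (by omega), ← exp_log (div_pos hpos hpos'), ← exp_nat_mul, logG,
    log_div hpos.ne' hpos'.ne', Nat.cast_sub (by omega)]
  push_cast
  ring

lemma hasDerivAt_logG {y : ℝ} (hy : 3 < y) :
    HasDerivAt logG (2 * (log (1 + ratioParam y) - log (1 - ratioParam y)) -
      (2 * y - 7) * (4 * y - 7) * ratioParam y / ((2 * y - 1) * (y - 3))) y := by
  set u := ratioParam y with hu
  set A := (y - 2) * (2 * y - 3) with hA
  have hApos : 0 < A := by nlinarith
  have hupos : 0 < u := ratioParam_pos (by linarith)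
  have hu2 : u ^ 2 = 3 / A := ratioParam_sq (by linarith)
  have hdA : HasDerivAt (fun y => (y - 2) * (2 * y - 3)) (4 * y - 7) y :=
    (((hasDerivAt_id' y).sub_const 2).mul (((hasDerivAt_id' y).const_mul 2).sub_const 3)).congr_deriv
      (by ring)
  have hdu : HasDerivAt ratioParam ((0 * A - 3 * (4 * y - 7)) / A ^ 2 / (2 * u)) y :=
    ((hasDerivAt_const y 3).div hdA hApos.ne').sqrt (div_pos three_pos hApos).ne'
  have hdl := (hasDerivAt_log_one_add_sub_log_one_sub (x := u) (by linarith)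
    (ratioParam_lt_one hy)).comp y hdu
  refine ((((hasDerivAt_id' y).const_mul 2).sub_const 7).mul hdl).congr_deriv ?_
  have h1 : 1 - u ^ 2 = (2 * y - 1) * (y - 3) / A := by
    rw [hu2, eq_div_iff hApos.ne', sub_mul, div_mul_cancel₀ _ hApos.ne', hA]; ring
  have hAu : A * u ^ 2 = 3 := by rw [hu2]; field_simp
  have h2 : 2 * y - 1 ≠ 0 := by linarith
  have h3 : y - 3 ≠ 0 := by linarith
  rw [h1, Function.comp_apply, ← hu]
  field_simp
  linear_combination (2 * y - 7) * (4 * y - 7) * hAu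

lemma logG_deriv_pos {y : ℝ} (hy : 3 < y) :
    0 < 2 * (log (1 + ratioParam y) - log (1 - ratioParam y)) -
      (2 * y - 7) * (4 * y - 7) * ratioParam y / ((2 * y - 1) * (y - 3)) := by
  set u := ratioParam y
  set A := (y - 2) * (2 * y - 3) with hA
  have hupos : 0 < u := ratioParam_pos (by linarith)
  have hApos : 0 < A := by nlinarith
  have hAu : A * u ^ 2 = 3 := by rw [ratioParam_sq (by linarith), ← hA]; field_simp
  have hD : 0 < (2 * y - 1) * (y - 3) := mul_pos (by linarith) (by linarith)
  have hlog := two_mul_add_le_log_sub_log hupos.le (ratioParam_lt_one hy)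
  have hgap : (4 * u + 4 * u ^ 3 / 3) * ((2 * y - 1) * (y - 3)) - (2 * y - 7) * (4 * y - 7) * u =
      u * u ^ 2 / 3 * (A * (14 * y - 33) - 12) := by
    linear_combination (-(u * (4 * ((2 * y - 1) * (y - 3)) - (2 * y - 7) * (4 * y - 7)) / 3)) * hAu
  have hgap_pos : 0 < u * u ^ 2 / 3 * (A * (14 * y - 33) - 12) := by
    have : 3 < A := by nlinarith
    have : 0 < A * (14 * y - 33) - 12 := by nlinarith
    positivity
  have : (2 * y - 7) * (4 * y - 7) * u / ((2 * y - 1) * (y - 3)) < 4 * u + 4 * u ^ 3 / 3 := by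
    rw [div_lt_iff₀ hD]
    linarith
  linarith

lemma strictMonoOn_logG : StrictMonoOn logG (Ioi 3) := by
  refine strictMonoOn_of_deriv_pos (convex_Ioi 3)
    (fun y hy => (hasDerivAt_logG hy).continuousAt.continuousWithinAt) fun y hy => ?_
  rw [interior_Ioi] at hy
  rw [(hasDerivAt_logG hy).deriv]
  exact logG_deriv_pos hy

lemma tendsto_ratioParam_atTop : Tendsto ratioParam atTop (𝓝 0) := by
  have hA : Tendsto (fun y : ℝ => (y - 2) * (2 * y - 3)) atTop atTop :=
    tendsto_atTop_mono' _ ((eventually_ge_atTop 3).mono fun y (hy : 3 ≤ y) =>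
      show y ≤ (y - 2) * (2 * y - 3) by nlinarith) tendsto_id
  have h := ((tendsto_const_nhds (x := (3 : ℝ))).div_atTop hA).sqrt
  rw [sqrt_zero] at h
  exact h

lemma tendsto_mul_ratioParam_atTop :
    Tendsto (fun y => (2 * y - 7) * ratioParam y) atTop (𝓝 √6) := by
  have hcont : ContinuousAt (fun z : ℝ => √(3 * (2 - 7 * z) ^ 2 / ((1 - 2 * z) * (2 - 3 * z)))) 0 := by
    fun_prop (disch := norm_num)
  have h := hcont.tendsto.comp tendsto_inv_atTop_zero
  norm_num at h
  refine h.congr' ((eventually_ge_atTop 4).mono fun y hy => ?_)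
  simp only [Function.comp_apply, ratioParam]
  rw [← sqrt_sq (by linarith : (0 : ℝ) ≤ 2 * y - 7),
    ← sqrt_mul (sq_nonneg _)]
  congr 1
  have : y ≠ 0 := by linarith
  have : y - 2 ≠ 0 := by linarith
  have : 2 * y - 3 ≠ 0 := by linarith
  field_simp

lemma tendsto_logG_atTop : Tendsto logG atTop (𝓝 (2 * √6)) :=
  tendsto_mul_log_sub_log ((eventually_ge_atTop 4).mono fun y hy => by linarith)
    ((eventually_ge_atTop 3).mono fun y hy => (ratioParam_pos (by linarith)).le)
    tendsto_ratioParam_atTop tendsto_mul_ratioParam_atTop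

theorem stmt14 :
    StrictMonoOn g (Set.Ici 4) ∧
    Filter.Tendsto g Filter.atTop (nhds (Real.exp (2 * Real.sqrt 6))) := by
  refine ⟨fun m hm n hn hmn => ?_, ?_⟩
  · rw [g_eq_exp_logG hm, g_eq_exp_logG hn, exp_lt_exp]
    have hm' : (3 : ℝ) < m := by exact_mod_cast (hm : 4 ≤ m)
    have hn' : (3 : ℝ) < n := by exact_mod_cast (hn : 4 ≤ n)
    exact strictMonoOn_logG hm' hn' (by exact_mod_cast hmn)
  · refine ((continuous_exp.tendsto _).comp
      (tendsto_logG_atTop.comp tendsto_natCast_atTop_atTop)).congr' ?_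
    filter_upwards [eventually_ge_atTop 4] with n hn
    exact (g_eq_exp_logG hn).symm
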